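/- Let X be a compact metric space, f : X → X continuous, and φ : X → ℝ continuous. Suppose for every x ∈ X, liminf_{n→∞} (1/n) Σ_{j=0}^{n-1} φ(f^j x) < 0. Then there exist a constant c > 0 and an integer N̄ ≥ 1 such that for every x ∈ X there is N₁(x) ∈ {1,…,N̄} with Σ_{j=0}^{N₁(x)-1} φ(f^j x) < -(c/2) N₁(x). -/

import Mathlib

open Filter Finset

/-!
Each point has some time `n ≥ 1` at which its Birkhoff sum `S_n φ` is negative, hence below `-n / m`
for all large `m`. The sets of points having such a time `n ≤ m` with `S_n φ < -n / m` are open,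
increase with `m` and cover `X`, so by compactness one of them is all of `X`; then `c = 2 / m` and
`N̄ = m` work.
-/

theorem Real.frequently_lt_zero_of_liminf_lt_zero {ι : Type*} {l : Filter ι} {u : ι → ℝ}
    (h : liminf u l < 0) : ∃ᶠ i in l, u i < 0 := by
  refine frequently_lt_of_liminf_lt ?_ h
  by_contra hcobdd
  -- Without coboundedness Mathlib's `liminf` is the junk value `sSup` of an unbounded set, i.e. `0`.
  exact h.ne (Real.sSup_of_not_bddAbove hcobdd)

theorem exists_birkhoffSum_neg_of_liminf_lt_zero {α : Type*} {f : α → α} {φ : α → ℝ} {x : α}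
    (h : liminf (fun n : ℕ => (1 / (n : ℝ)) * birkhoffSum f φ n x) atTop < 0) :
    ∃ n, 0 < n ∧ birkhoffSum f φ n x < 0 := by
  obtain ⟨n, hneg, hn⟩ :=
    ((Real.frequently_lt_zero_of_liminf_lt_zero h).and_eventually (eventually_gt_atTop 0)).exists
  exact ⟨n, hn, neg_of_mul_neg_right hneg (by positivity)⟩

theorem IsCompact.eventually_subset_of_monotone {X : Type*} [TopologicalSpace X] {s : Set X}
    (hs : IsCompact s) {U : ℕ → Set X} (hUo : ∀ n, IsOpen (U n)) (hU : Monotone U)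
    (hsU : ∀ x ∈ s, ∀ᶠ n in atTop, x ∈ U n) : ∀ᶠ n in atTop, s ⊆ U n := by
  have hcover : s ⊆ ⋃ n, U n := fun x hx => Set.mem_iUnion.2 (hsU x hx).exists
  obtain ⟨n, hn⟩ := hs.elim_directed_cover U hUo hcover hU.directed_le
  exact eventually_atTop.2 ⟨n, fun m hm => hn.trans (hU hm)⟩

section UniformlyNegative

variable {X : Type*} (f : X → X) (φ : X → ℝ)

def birkhoffUniformlyNegativeSet (m : ℕ) : Set X :=
  ⋃ n ∈ Finset.Icc 1 m, {y | birkhoffSum f φ n y < -(n / m : ℝ)}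

theorem isOpen_birkhoffUniformlyNegativeSet [TopologicalSpace X] (hf : Continuous f)
    (hφ : Continuous φ) (m : ℕ) :
    IsOpen (birkhoffUniformlyNegativeSet f φ m) :=
  isOpen_biUnion fun _ _ =>
    isOpen_lt (continuous_finsetSum _ fun j _ => hφ.comp (hf.iterate j)) continuous_const

theorem monotone_birkhoffUniformlyNegativeSet : Monotone (birkhoffUniformlyNegativeSet f φ) := by
  intro m m' hm y hy
  simp only [birkhoffUniformlyNegativeSet, Set.mem_iUnion, Finset.mem_Icc] at hy ⊢
  obtain ⟨n, ⟨hn1, hnm⟩, hy⟩ := hy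
  refine ⟨n, ⟨hn1, hnm.trans hm⟩, Set.mem_ofPred.2 ((Set.mem_ofPred.1 hy).trans_le ?_)⟩
  have : (0 : ℝ) < m := by exact_mod_cast hn1.trans hnm
  gcongr

theorem eventually_mem_birkhoffUniformlyNegativeSet {x : X} {n : ℕ} (hn : 0 < n)
    (hx : birkhoffSum f φ n x < 0) :
    ∀ᶠ m in atTop, x ∈ birkhoffUniformlyNegativeSet f φ m := by
  have hsmall : ∀ᶠ m : ℕ in atTop, (n / m : ℝ) < -birkhoffSum f φ n x :=
    (tendsto_const_div_atTop_nhds_zero_nat (n : ℝ)).eventually (gt_mem_nhds (by linarith))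
  filter_upwards [hsmall, eventually_ge_atTop n] with m hm hnm
  exact Set.mem_biUnion (Finset.mem_Icc.2 ⟨hn, hnm⟩) (Set.mem_ofPred.2 (by linarith))

end UniformlyNegative

theorem stmt_3 {X : Type*} [MetricSpace X] [CompactSpace X]
    (f : X → X) (hf : Continuous f) (φ : X → ℝ) (hφ : Continuous φ)
    (h : ∀ x : X, liminf (fun n : ℕ => (1 / (n : ℝ)) * ∑ j ∈ range n, φ (f^[j] x)) atTop < 0) :
    ∃ c : ℝ, 0 < c ∧ ∃ Nbar : ℕ, 1 ≤ Nbar ∧ ∀ x : X, ∃ N₁ : ℕ, 1 ≤ N₁ ∧ N₁ ≤ Nbar ∧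
      ∑ j ∈ range N₁, φ (f^[j] x) < -(c / 2) * N₁ := by
  have hmem : ∀ x ∈ Set.univ, ∀ᶠ m in atTop, x ∈ birkhoffUniformlyNegativeSet f φ m := by
    intro x _
    obtain ⟨n, hn, hx⟩ := exists_birkhoffSum_neg_of_liminf_lt_zero (h x)
    exact eventually_mem_birkhoffUniformlyNegativeSet f φ hn hx
  have hcover := isCompact_univ.eventually_subset_of_monotone
    (isOpen_birkhoffUniformlyNegativeSet f φ hf hφ) (monotone_birkhoffUniformlyNegativeSet f φ) hmem
  obtain ⟨m, hcover, hm⟩ := (hcover.and (eventually_ge_atTop 1)).exists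
  refine ⟨2 / m, by positivity, m, hm, fun x => ?_⟩
  obtain ⟨n, hn, hx⟩ := Set.mem_iUnion₂.1 (hcover (Set.mem_univ x))
  refine ⟨n, (Finset.mem_Icc.1 hn).1, (Finset.mem_Icc.1 hn).2, hx.trans_eq ?_⟩
  have : (m : ℝ) ≠ 0 := by positivity
  field_simp
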